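/- arXiv:1405.1130 — 7 statements merged into one kernel-verified Lean document; each statement's English description precedes it below -/
import Mathlib

section
/- Let X be a metric space, f : X → ℝ ∪ {+∞}, and x̄ ∈ X with f(x̄) = 0. Then the strict outer slope of f at x̄ is bounded above by the uniform strict slope of f at x̄: \overline{|∇f|}^>(x̄) ≤ \overline{|∇f|}^◇(x̄). -/
open Filter Metric Topology ENNReal

/-- The "positive part" of an extended real, as an element of `ℝ≥0∞`. -/
noncomputable def ePlus (a : EReal) : ℝ≥0∞ := if a = ⊤ then ⊤ else ENNReal.ofReal a.toReal

variable {X : Type*} [MetricSpace X]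

/-- The local slope `|∇f|(x) := limsup_{u→x, u≠x} [f(x) − f(u)]₊ / d(u,x)`,
with the convention `|∇f|(x) = +∞` when `f(x) = +∞`. -/
noncomputable def locSlope (f : X → EReal) (x : X) : ℝ≥0∞ :=
  if f x = ⊤ then ⊤ else
    Filter.limsup (fun u => ePlus (f x - f u) / ENNReal.ofReal (dist u x)) (𝓝[≠] x)

/-- The nonlocal slope `|∇f|^◇(x) := sup_{u≠x} [f(x) − f₊(u)]₊ / d(u,x)`. -/
noncomputable def nlSlope (f : X → EReal) (x : X) : ℝ≥0∞ :=
  ⨆ (u : X) (_ : u ≠ x), ePlus (f x - max (f u) 0) / ENNReal.ofReal (dist u x)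

/-- The strict outer slope `\overline{|∇f|}^>(x̄) := liminf_{x→x̄, f(x)↓0} |∇f|(x)`,
realized as the limit (= supremum) as `ρ↓0` of the infimum of `|∇f|(x)` over all `x` with
`d(x,x̄) < ρ` and `0 < f(x) < ρ` (infimum of the empty set is `+∞`). -/
noncomputable def strictOuterSlope (f : X → EReal) (x₀ : X) : ℝ≥0∞ :=
  ⨆ (ρ : ℝ) (_ : 0 < ρ),
    ⨅ (x : X) (_ : dist x x₀ < ρ ∧ 0 < f x ∧ f x < (ρ : EReal)), locSlope f x

/-- The uniform strict slope `\overline{|∇f|}^◇(x̄) := liminf_{x→x̄, f(x)↓0} |∇f|^◇(x)`. -/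
noncomputable def uStrictSlope (f : X → EReal) (x₀ : X) : ℝ≥0∞ :=
  ⨆ (ρ : ℝ) (_ : 0 < ρ),
    ⨅ (x : X) (_ : dist x x₀ < ρ ∧ 0 < f x ∧ f x < (ρ : EReal)), nlSlope f x

/-! Near a point `x` with `0 < f x < +∞`, either `f` takes nonpositive values arbitrarily close
to `x`, and then the quotients `f x / d(u, x)` make the nonlocal slope infinite, or `f ≥ 0` near
`x`, and then `f₊ = f` there, so every quotient in the limsup defining the local slope also
occurs in the supremum defining the nonlocal slope. Comparing the two slopes pointwise on the
sets `d(x, x̄) < ρ, 0 < f x < ρ` gives the inequality between the strict slopes. -/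

lemma ePlus_ne_zero {a : EReal} (ha : 0 < a) : ePlus a ≠ 0 := by
  unfold ePlus
  split_ifs with htop
  · exact ENNReal.top_ne_zero
  · exact (ENNReal.ofReal_pos.mpr (EReal.toReal_pos ha htop)).ne'

lemma le_nlSlope (f : X → EReal) {x u : X} (hux : u ≠ x) :
    ePlus (f x - max (f u) 0) / ENNReal.ofReal (dist u x) ≤ nlSlope f x :=
  le_iSup₂ (f := fun u (_ : u ≠ x) => ePlus (f x - max (f u) 0) / ENNReal.ofReal (dist u x))
    u hux

lemma nlSlope_eq_top_of_frequently_nonpos {f : X → EReal} {x : X} (hx : 0 < f x)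
    (hfreq : ∃ᶠ u in 𝓝[≠] x, f u ≤ 0) : nlSlope f x = ⊤ := by
  have hdist : Tendsto (fun u => ENNReal.ofReal (dist u x)) (𝓝[≠] x) (𝓝 0) := by
    simpa only [ENNReal.ofReal_zero, id] using (ENNReal.tendsto_ofReal (tendsto_iff_dist_tendsto_zero.mp tendsto_id)).mono_left
      nhdsWithin_le_nhds
  have hquot : Tendsto (fun u => ePlus (f x) / ENNReal.ofReal (dist u x)) (𝓝[≠] x) (𝓝 ⊤) := by
    simpa only [ENNReal.div_zero (ePlus_ne_zero hx)] using
      ENNReal.Tendsto.const_div (a := ePlus (f x)) hdist (Or.inl zero_ne_top)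
  refine top_unique (le_of_forall_lt fun r hr => ?_)
  obtain ⟨u, hru, hfu, hux⟩ :=
    ((hquot.eventually (lt_mem_nhds hr)).and_frequently (hfreq.and_eventually
      self_mem_nhdsWithin)).exists
  calc r < ePlus (f x) / ENNReal.ofReal (dist u x) := hru
    _ = ePlus (f x - max (f u) 0) / ENNReal.ofReal (dist u x) := by
      rw [max_eq_right hfu, sub_zero]
    _ ≤ nlSlope f x := le_nlSlope f hux

lemma locSlope_le_nlSlope_of_eventually_nonneg {f : X → EReal} {x : X} (htop : f x ≠ ⊤)
    (hnonneg : ∀ᶠ u in 𝓝[≠] x, 0 ≤ f u) : locSlope f x ≤ nlSlope f x := by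
  rw [locSlope, if_neg htop]
  refine limsup_le_of_le (by isBoundedDefault) ?_
  filter_upwards [hnonneg, self_mem_nhdsWithin] with u hfu hux
  simpa only [max_eq_left hfu] using le_nlSlope f hux

lemma locSlope_le_nlSlope {f : X → EReal} {x : X} (hpos : 0 < f x) (htop : f x ≠ ⊤) :
    locSlope f x ≤ nlSlope f x := by
  by_cases hfreq : ∃ᶠ u in 𝓝[≠] x, f u ≤ 0
  · exact (nlSlope_eq_top_of_frequently_nonpos hpos hfreq).symm ▸ le_top
  · refine locSlope_le_nlSlope_of_eventually_nonneg htop ?_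
    filter_upwards [not_frequently.mp hfreq] with u hu using (not_le.mp hu).le

theorem strictOuterSlope_le_uStrictSlope_general (f : X → EReal) (x₀ : X) :
    strictOuterSlope f x₀ ≤ uStrictSlope f x₀ :=
  iSup₂_mono fun _ _ => iInf₂_mono fun _ hx =>
    locSlope_le_nlSlope hx.2.1 (hx.2.2.trans_le le_top).ne

/-- `\overline{|∇f|}^>(x̄) ≤ \overline{|∇f|}^◇(x̄)`. -/
theorem strictOuterSlope_le_uStrictSlope (f : X → EReal) (x₀ : X)
    (hbot : ∀ u, f u ≠ ⊥) (hx₀ : f x₀ = 0) :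
    strictOuterSlope f x₀ ≤ uStrictSlope f x₀ :=
  strictOuterSlope_le_uStrictSlope_general f x₀
end

section
/- Let X and Y be metric spaces, f : X×Y → ℝ ∪ {+∞} with f(x̄,ȳ) = 0 satisfying (P1) and (P2). Then Er f(x̄,ȳ) = liminf_{x→x̄, y→ȳ, f(x,y)>0} f(x,y)/d(x,S(f)) = liminf_{x→x̄, f(x,y)↓0} f(x,y)/d(x,S(f)), i.e. the three lower limits (over points (x,y) with f(x,y)>0 and x→x̄; over points with f(x,y)>0, x→x̄ and y→ȳ; and over points with x→x̄ and f(x,y) decreasing to 0) coincide. -/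
open Filter Metric Topology ENNReal

/-!
Restricting the admissible points only raises each infimum, so the first modulus is at most
the other two. Conversely, fix `δ > 0`. A point `(x, y)` with `d(x, x̄) < t` and `f(x, y) > 0`
either is admissible for the restricted infimum at `δ`, or satisfies `f(x, y) ≥ m` for a fixed
`m > 0`: when `d(y, ȳ) ≥ δ` this is (P2), and when `f(x, y) ≥ δ` it is immediate. In the
second case its ratio is at least `m / t`, because `d(x, S(f)) ≤ d(x, x̄) < t`; and
`m / t → ∞` as `t ↓ 0`.
-/

lemma ofReal_le_ePlus {a : EReal} {r : ℝ} (h : (r : EReal) ≤ a) :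
    ENNReal.ofReal r ≤ ePlus a := by
  unfold ePlus
  split_ifs with htop
  · exact le_top
  · refine ENNReal.ofReal_le_ofReal ?_
    simpa using EReal.toReal_le_toReal h (EReal.coe_ne_bot r) htop

lemma tendsto_min_div_ofReal_nhdsGT_zero (B : ℝ≥0∞) {m : ℝ≥0∞} (hm : m ≠ 0) :
    Tendsto (fun t : ℝ => min B (m / ENNReal.ofReal t)) (𝓝[>] 0) (𝓝 B) := by
  have hofReal : Tendsto (fun t : ℝ => ENNReal.ofReal t) (𝓝[>] 0) (𝓝 0) := by
    simpa using (ENNReal.continuous_ofReal.tendsto 0).mono_left nhdsWithin_le_nhds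
  have hdiv := ENNReal.Tendsto.const_div (a := m) hofReal (Or.inl zero_ne_top)
  rw [ENNReal.div_zero hm] at hdiv
  simpa using tendsto_const_nhds.min hdiv

lemma min_mul_dist_le_ePlus {α β : Type*} [PseudoMetricSpace β] {f : α × β → EReal} {y₀ : β}
    {δ₀ : ℝ} {c : ℝ≥0∞}
    (hc : c ≤ ⨅ (q : α × β) (_ : 0 < f q ∧ f q < (δ₀ : EReal)),
      ePlus (f q) / ENNReal.ofReal (dist q.2 y₀))
    {p : α × β} (hp : 0 < f p) :
    min (ENNReal.ofReal δ₀) (c * ENNReal.ofReal (dist p.2 y₀)) ≤ ePlus (f p) := by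
  by_cases hsmall : f p < (δ₀ : EReal)
  · exact min_le_of_right_le (ENNReal.mul_le_of_le_div (hc.trans (iInf₂_le p ⟨hp, hsmall⟩)))
  · exact min_le_of_left_le (ofReal_le_ePlus (not_lt.1 hsmall))

lemma infEDist_le_ofReal_of_dist_lt {α : Type*} [PseudoMetricSpace α] {S : Set α} {x₀ x : α}
    (hx₀ : x₀ ∈ S) {t : ℝ} (hx : dist x x₀ < t) : infEDist x S ≤ ENNReal.ofReal t :=
  (Metric.infEDist_le_edist_of_mem hx₀).trans
    ((edist_dist x x₀).trans_le (ENNReal.ofReal_le_ofReal hx.le))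

lemma le_iSup_iInf_ePlus_div_infEDist {α β : Type*} [PseudoMetricSpace α] {f : α × β → EReal}
    {S : Set α} {x₀ : α} (hx₀ : x₀ ∈ S) {B m : ℝ≥0∞} (hm : m ≠ 0) {δ : ℝ} (hδ : 0 < δ)
    (h : ∀ p : α × β, dist p.1 x₀ < δ → 0 < f p →
      B ≤ ePlus (f p) / infEDist p.1 S ∨ m ≤ ePlus (f p)) :
    B ≤ ⨆ (t : ℝ) (_ : 0 < t),
      ⨅ (p : α × β) (_ : dist p.1 x₀ < t ∧ 0 < f p), ePlus (f p) / infEDist p.1 S := by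
  refine le_of_tendsto (tendsto_min_div_ofReal_nhdsGT_zero B hm) ?_
  filter_upwards [Ioo_mem_nhdsGT hδ] with t ht
  refine le_iSup₂_of_le t ht.1 (le_iInf₂ fun p hp => ?_)
  rcases h p (hp.1.trans ht.2) hp.2 with hB | hfar
  · exact min_le_of_left_le hB
  · exact min_le_of_right_le
      (ENNReal.div_le_div hfar (infEDist_le_ofReal_of_dist_lt hx₀ hp.1))

variable {X Y : Type*} [MetricSpace X] [MetricSpace Y]

theorem erMod_two_var_reprs_general (f : X × Y → EReal) (x₀ : X) (y₀ : Y)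
    (hf₀ : f (x₀, y₀) = 0)
    (hP2 : 0 < ⨆ (δ : ℝ) (_ : 0 < δ),
        ⨅ (p : X × Y) (_ : 0 < f p ∧ f p < (δ : EReal)),
          ePlus (f p) / ENNReal.ofReal (dist p.2 y₀)) :
    (⨆ (δ : ℝ) (_ : 0 < δ),
        ⨅ (p : X × Y) (_ : dist p.1 x₀ < δ ∧ 0 < f p),
          ePlus (f p) / EMetric.infEdist p.1 {x | f (x, y₀) ≤ 0}) =
      (⨆ (δ : ℝ) (_ : 0 < δ),
        ⨅ (p : X × Y) (_ : dist p.1 x₀ < δ ∧ dist p.2 y₀ < δ ∧ 0 < f p),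
          ePlus (f p) / EMetric.infEdist p.1 {x | f (x, y₀) ≤ 0}) ∧
    (⨆ (δ : ℝ) (_ : 0 < δ),
        ⨅ (p : X × Y) (_ : dist p.1 x₀ < δ ∧ 0 < f p),
          ePlus (f p) / EMetric.infEdist p.1 {x | f (x, y₀) ≤ 0}) =
      (⨆ (δ : ℝ) (_ : 0 < δ),
        ⨅ (p : X × Y) (_ : dist p.1 x₀ < δ ∧ 0 < f p ∧ f p < (δ : EReal)),
          ePlus (f p) / EMetric.infEdist p.1 {x | f (x, y₀) ≤ 0}) := by
  have hx₀ : x₀ ∈ {x | f (x, y₀) ≤ 0} := hf₀.le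
  obtain ⟨δ₀, hP2⟩ := lt_iSup_iff.1 hP2
  obtain ⟨hδ₀, hc⟩ := lt_iSup_iff.1 hP2
  refine ⟨le_antisymm (iSup₂_mono fun δ _ => biInf_mono fun p hp => ⟨hp.1, hp.2.2⟩)
      (iSup₂_le fun δ hδ => ?_),
    le_antisymm (iSup₂_mono fun δ _ => biInf_mono fun p hp => ⟨hp.1, hp.2.1⟩)
      (iSup₂_le fun δ hδ => ?_)⟩
  · have hm : min (ENNReal.ofReal δ₀) (_ * ENNReal.ofReal δ) ≠ 0 := (lt_min
      (ENNReal.ofReal_pos.2 hδ₀) (ENNReal.mul_pos hc.ne' (ENNReal.ofReal_pos.2 hδ).ne')).ne'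
    refine le_iSup_iInf_ePlus_div_infEDist hx₀ hm hδ fun p hpx hpf => ?_
    by_cases hy : dist p.2 y₀ < δ
    · exact .inl (iInf₂_le p ⟨hpx, hy, hpf⟩)
    · refine .inr ((min_mul_dist_le_ePlus (y₀ := y₀) (δ₀ := δ₀) le_rfl hpf).trans' ?_)
      gcongr
      exact not_lt.1 hy
  · refine le_iSup_iInf_ePlus_div_infEDist hx₀ (ENNReal.ofReal_pos.2 hδ).ne' hδ
      fun p hpx hpf => ?_
    by_cases hfδ : f p < (δ : EReal)
    · exact .inl (iInf₂_le p ⟨hpx, hpf, hfδ⟩)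
    · exact .inr (ofReal_le_ePlus (not_lt.1 hfδ))

/-- for `f : X×Y → ℝ∪{+∞}` with `f(x̄,ȳ) = 0` satisfying (P1) and (P2), the
error bound modulus `Er f(x̄,ȳ) = liminf_{x→x̄, f(x,y)>0} f(x,y)/d(x,S(f))` coincides with
`liminf_{x→x̄, y→ȳ, f(x,y)>0} f(x,y)/d(x,S(f))` and with
`liminf_{x→x̄, f(x,y)↓0} f(x,y)/d(x,S(f))`, each lower limit being realized as the limit
(= supremum) as `δ↓0` of the corresponding infimum (with `S(f) = {x : f(x,ȳ) ≤ 0}`). -/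
theorem erMod_two_var_reprs (f : X × Y → EReal) (x₀ : X) (y₀ : Y)
    (hbot : ∀ p, f p ≠ ⊥) (hf₀ : f (x₀, y₀) = 0)
    (hP1 : ∀ x : X, ∀ y : Y, y ≠ y₀ → 0 < f (x, y))
    (hP2 : 0 < ⨆ (δ : ℝ) (_ : 0 < δ),
        ⨅ (p : X × Y) (_ : 0 < f p ∧ f p < (δ : EReal)),
          ePlus (f p) / ENNReal.ofReal (dist p.2 y₀)) :
    (⨆ (δ : ℝ) (_ : 0 < δ),
        ⨅ (p : X × Y) (_ : dist p.1 x₀ < δ ∧ 0 < f p),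
          ePlus (f p) / EMetric.infEdist p.1 {x | f (x, y₀) ≤ 0}) =
      (⨆ (δ : ℝ) (_ : 0 < δ),
        ⨅ (p : X × Y) (_ : dist p.1 x₀ < δ ∧ dist p.2 y₀ < δ ∧ 0 < f p),
          ePlus (f p) / EMetric.infEdist p.1 {x | f (x, y₀) ≤ 0}) ∧
    (⨆ (δ : ℝ) (_ : 0 < δ),
        ⨅ (p : X × Y) (_ : dist p.1 x₀ < δ ∧ 0 < f p),
          ePlus (f p) / EMetric.infEdist p.1 {x | f (x, y₀) ≤ 0}) =
      (⨆ (δ : ℝ) (_ : 0 < δ),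
        ⨅ (p : X × Y) (_ : dist p.1 x₀ < δ ∧ 0 < f p ∧ f p < (δ : EReal)),
          ePlus (f p) / EMetric.infEdist p.1 {x | f (x, y₀) ≤ 0}) :=
  erMod_two_var_reprs_general f x₀ y₀ hf₀ hP2
end

section
/- Let X and Y be metric spaces, f : X×Y → ℝ ∪ {+∞} with f(x̄,ȳ) = 0 satisfying (P1) and (P2). Then the uniform strict slope of f at (x̄,ȳ) satisfies \overline{|∇f|}^◇(x̄,ȳ) ≥ liminf_{x→x̄, f(x,y)↓0} f(x,y)/d(x,x̄), where the right-hand side is the limit as ρ↓0 of the infimum of f(x,y)/d(x,x̄) over all (x,y) with d(x,x̄) < ρ and 0 < f(x,y) < ρ. -/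
/-! Testing the slope at `p = (x, y)` against the zero `(x̄, ȳ)` of `f` gives
`|∇f|^◇_ρ(p) ≥ f(p) / max {d(x, x̄), ρ d(y, ȳ)} ≥ min {f(p) / d(x, x̄), c / ρ}`, where `c > 0` is
a lower bound for `f(p) / d(y, ȳ)` near level `0` provided by (P2). As `ρ ↓ 0` the term `c / ρ`
blows up, so only the infimum of `f(p) / d(x, x̄)` survives in the limit. -/

open Filter Metric Topology ENNReal

variable {X Y : Type*} [MetricSpace X] [MetricSpace Y]

/-- The ρ-metric on `X × Y`: `d_ρ((x,y),(u,v)) := max {d(x,u), ρ d(y,v)}`. -/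
noncomputable def dRho (ρ : ℝ) (p q : X × Y) : ℝ := max (dist p.1 q.1) (ρ * dist p.2 q.2)

/-- The nonlocal ρ-slope of `f` at `(x,y)`:
`|∇f|^◇_ρ(x,y) := sup_{(u,v)≠(x,y)} [f(x,y) − f₊(u,v)]₊ / d_ρ((x,y),(u,v))`. -/
noncomputable def nlSlopeRho (f : X × Y → EReal) (ρ : ℝ) (p : X × Y) : ℝ≥0∞ :=
  ⨆ (q : X × Y) (_ : q ≠ p), ePlus (f p - max (f q) 0) / ENNReal.ofReal (dRho ρ p q)

/-- The uniform strict slope of `f` at `(x̄,ȳ)`: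
`\overline{|∇f|}^◇(x̄,ȳ) := lim_{ρ↓0} inf {|∇f|^◇_ρ(x,y) : d(x,x̄) < ρ, 0 < f(x,y) < ρ}`
(the limit being a supremum by monotonicity; `inf ∅ = +∞`). -/
noncomputable def uStrictSlope2 (f : X × Y → EReal) (x₀ : X) : ℝ≥0∞ :=
  ⨆ (ρ : ℝ) (_ : 0 < ρ),
    ⨅ (p : X × Y) (_ : dist p.1 x₀ < ρ ∧ 0 < f p ∧ f p < (ρ : EReal)), nlSlopeRho f ρ p

lemma ENNReal.min_div_le_div_max (a b c : ℝ≥0∞) : min (a / b) (a / c) ≤ a / max b c := by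
  rcases le_total b c with h | h
  · rw [max_eq_right h]; exact min_le_right _ _
  · rw [max_eq_left h]; exact min_le_left _ _

lemma ENNReal.div_div_ofReal_eq_div_mul (a b : ℝ≥0∞) {ρ : ℝ} (hρ : 0 < ρ) :
    a / b / ENNReal.ofReal ρ = a / (ENNReal.ofReal ρ * b) := by
  rw [div_eq_mul_inv, div_eq_mul_inv, div_eq_mul_inv, mul_assoc,
    ENNReal.mul_inv (Or.inl (ENNReal.ofReal_pos.2 hρ).ne') (Or.inl ofReal_ne_top), mul_comm b⁻¹]

lemma ofReal_dRho {ρ : ℝ} (hρ : 0 ≤ ρ) (p q : X × Y) :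
    ENNReal.ofReal (dRho ρ p q) =
      max (ENNReal.ofReal (dist p.1 q.1)) (ENNReal.ofReal ρ * ENNReal.ofReal (dist p.2 q.2)) := by
  rw [dRho, ENNReal.ofReal_max, ENNReal.ofReal_mul hρ]

lemma div_dRho_le_nlSlopeRho (f : X × Y → EReal) (ρ : ℝ) {p q : X × Y} (hqp : q ≠ p)
    (hq : f q = 0) : ePlus (f p) / ENNReal.ofReal (dRho ρ p q) ≤ nlSlopeRho f ρ p := by
  have := le_iSup₂ (f := fun (q : X × Y) (_ : q ≠ p) =>
    ePlus (f p - max (f q) 0) / ENNReal.ofReal (dRho ρ p q)) q hqp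
  rw [nlSlopeRho]
  simpa only [hq, max_self, sub_zero] using this

lemma min_div_dist_le_nlSlopeRho {f : X × Y → EReal} {x₀ : X} {y₀ : Y} (hf₀ : f (x₀, y₀) = 0)
    {ρ : ℝ} (hρ : 0 < ρ) {p : X × Y} (hp : 0 < f p) :
    min (ePlus (f p) / ENNReal.ofReal (dist p.1 x₀))
      (ePlus (f p) / ENNReal.ofReal (dist p.2 y₀) / ENNReal.ofReal ρ) ≤ nlSlopeRho f ρ p := by
  have hp₀ : ((x₀, y₀) : X × Y) ≠ p := fun h => hp.ne' (h ▸ hf₀)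
  refine le_trans ?_ (div_dRho_le_nlSlopeRho f ρ hp₀ hf₀)
  rw [ofReal_dRho hρ.le, ENNReal.div_div_ofReal_eq_div_mul _ _ hρ]
  exact ENNReal.min_div_le_div_max _ _ _

lemma biInf_div_dist_fst_antitone {Z : Type*} (f : X × Z → EReal) (x₀ : X) {ρ ρ' : ℝ}
    (h : ρ ≤ ρ') :
    ⨅ (p : X × Z) (_ : dist p.1 x₀ < ρ' ∧ 0 < f p ∧ f p < (ρ' : EReal)),
        ePlus (f p) / ENNReal.ofReal (dist p.1 x₀) ≤
      ⨅ (p : X × Z) (_ : dist p.1 x₀ < ρ ∧ 0 < f p ∧ f p < (ρ : EReal)),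
        ePlus (f p) / ENNReal.ofReal (dist p.1 x₀) :=
  le_iInf₂ fun p hp =>
    iInf₂_le p ⟨hp.1.trans_le h, hp.2.1, hp.2.2.trans_le (EReal.coe_le_coe_iff.2 h)⟩

lemma min_biInf_div_dist_le_biInf_nlSlopeRho {f : X × Y → EReal} {x₀ : X} {y₀ : Y}
    (hf₀ : f (x₀, y₀) = 0) {δ ρ : ℝ} (hρ : 0 < ρ) (hρδ : ρ ≤ δ) :
    min (⨅ (p : X × Y) (_ : dist p.1 x₀ < ρ ∧ 0 < f p ∧ f p < (ρ : EReal)),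
          ePlus (f p) / ENNReal.ofReal (dist p.1 x₀))
        ((⨅ (p : X × Y) (_ : 0 < f p ∧ f p < (δ : EReal)),
          ePlus (f p) / ENNReal.ofReal (dist p.2 y₀)) / ENNReal.ofReal ρ) ≤
      ⨅ (p : X × Y) (_ : dist p.1 x₀ < ρ ∧ 0 < f p ∧ f p < (ρ : EReal)), nlSlopeRho f ρ p :=
  le_iInf₂ fun p hp =>
    (min_le_min (iInf₂_le p hp) (ENNReal.div_le_div_right
      (iInf₂_le p ⟨hp.2.1, hp.2.2.trans_le (EReal.coe_le_coe_iff.2 hρδ)⟩) _)).trans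
      (min_div_dist_le_nlSlopeRho hf₀ hρ hp.2.1)

lemma ENNReal.iSup_pos_le_iSup_pos_of_min_div_le {g h : ℝ → ℝ≥0∞} {c : ℝ≥0∞} {δ : ℝ}
    (hc : 0 < c) (hδ : 0 < δ) (hg : Antitone g)
    (hgh : ∀ ρ, 0 < ρ → ρ ≤ δ → min (g ρ) (c / ENNReal.ofReal ρ) ≤ h ρ) :
    ⨆ (ρ : ℝ) (_ : 0 < ρ), g ρ ≤ ⨆ (ρ : ℝ) (_ : 0 < ρ), h ρ := by
  refine le_of_forall_lt fun b hb => ?_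
  obtain ⟨ρ₀, hρ₀, hb₀⟩ := lt_biSup_iff.1 hb
  have hb_top : b ≠ ⊤ := ne_top_of_lt hb₀
  have hsmall : Tendsto (fun ρ => b * ENNReal.ofReal ρ) (𝓝[>] 0) (𝓝 0) := by
    simpa using ENNReal.Tendsto.const_mul
      ((ENNReal.continuous_ofReal.tendsto 0).mono_left nhdsWithin_le_nhds) (Or.inr hb_top)
  have hIoo : ∀ᶠ ρ in 𝓝[>] (0 : ℝ), ρ ∈ Set.Ioo 0 (min ρ₀ δ) := Ioo_mem_nhdsGT (lt_min hρ₀ hδ)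
  obtain ⟨ρ, ⟨hρ, hρmin⟩, hbρ⟩ := (hIoo.and (hsmall.eventually (gt_mem_nhds hc))).exists
  obtain ⟨hρρ₀, hρδ⟩ := lt_min_iff.1 hρmin
  calc b < min (g ρ) (c / ENNReal.ofReal ρ) :=
        lt_min (hb₀.trans_le (hg hρρ₀.le))
          ((ENNReal.lt_div_iff_mul_lt (Or.inr hb_top) (Or.inl ofReal_ne_top)).2 hbρ)
    _ ≤ h ρ := hgh ρ hρ hρδ.le
    _ ≤ ⨆ (ρ : ℝ) (_ : 0 < ρ), h ρ := le_iSup₂ (f := fun ρ (_ : 0 < ρ) => h ρ) ρ hρ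

theorem uStrictSlope2_ge_general (f : X × Y → EReal) (x₀ : X) (y₀ : Y)
    (hf₀ : f (x₀, y₀) = 0)
    (hP2 : 0 < ⨆ (δ : ℝ) (_ : 0 < δ),
        ⨅ (p : X × Y) (_ : 0 < f p ∧ f p < (δ : EReal)),
          ePlus (f p) / ENNReal.ofReal (dist p.2 y₀)) :
    (⨆ (ρ : ℝ) (_ : 0 < ρ),
        ⨅ (p : X × Y) (_ : dist p.1 x₀ < ρ ∧ 0 < f p ∧ f p < (ρ : EReal)),
          ePlus (f p) / ENNReal.ofReal (dist p.1 x₀)) ≤ uStrictSlope2 f x₀ := by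
  obtain ⟨δ, hδ, hc⟩ := lt_biSup_iff.1 hP2
  exact ENNReal.iSup_pos_le_iSup_pos_of_min_div_le hc hδ
    (fun _ _ => biInf_div_dist_fst_antitone f x₀)
    (fun _ hρ hρδ => min_biInf_div_dist_le_biInf_nlSlopeRho hf₀ hρ hρδ)

/-- `\overline{|∇f|}^◇(x̄,ȳ) ≥ liminf_{x→x̄, f(x,y)↓0} f(x,y)/d(x,x̄)`, where the
right-hand side is the limit (= supremum) as `ρ↓0` of the infimum of `f(x,y)/d(x,x̄)` over all
`(x,y)` with `d(x,x̄) < ρ` and `0 < f(x,y) < ρ`. -/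
theorem uStrictSlope2_ge (f : X × Y → EReal) (x₀ : X) (y₀ : Y)
    (hbot : ∀ p, f p ≠ ⊥) (hf₀ : f (x₀, y₀) = 0)
    (hP1 : ∀ x : X, ∀ y : Y, y ≠ y₀ → 0 < f (x, y))
    (hP2 : 0 < ⨆ (δ : ℝ) (_ : 0 < δ),
        ⨅ (p : X × Y) (_ : 0 < f p ∧ f p < (δ : EReal)),
          ePlus (f p) / ENNReal.ofReal (dist p.2 y₀)) :
    (⨆ (ρ : ℝ) (_ : 0 < ρ),
        ⨅ (p : X × Y) (_ : dist p.1 x₀ < ρ ∧ 0 < f p ∧ f p < (ρ : EReal)),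
          ePlus (f p) / ENNReal.ofReal (dist p.1 x₀)) ≤ uStrictSlope2 f x₀ :=
  uStrictSlope2_ge_general f x₀ y₀ hf₀ hP2
end

section
/- Let X and Y be normed linear spaces and f : X×Y → ℝ ∪ {+∞}. Then for every ρ > 0 and every (x,y) ∈ X×Y with f(x,y) < +∞, the ρ-slope of f at (x,y) satisfies |∇f|_ρ(x,y) ≤ |∂f|_{ρ²}(x,y) + ρ. -/
open Filter Metric Topology ENNReal

/-- The Fréchet subdifferential of `g` at `p` (empty when `g(p) = +∞`);
the defining liminf inequality is expressed in the equivalent ε-form. -/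
def frSubdiff {E : Type*} [NormedAddCommGroup E] [NormedSpace ℝ E]
    (g : E → EReal) (p : E) : Set (E →L[ℝ] ℝ) :=
  {l | g p ≠ ⊤ ∧ ∀ ε : ℝ, 0 < ε →
    ∀ᶠ q in 𝓝[≠] p, g p + ((l (q - p) - ε * ‖q - p‖ : ℝ) : EReal) ≤ g q}

variable {X Y : Type*} [NormedAddCommGroup X] [NormedSpace ℝ X]
  [NormedAddCommGroup Y] [NormedSpace ℝ Y]

/-- The ρ-slope of `f` at `(x,y)`:
`|∇f|_ρ(x,y) := limsup_{(u,v)→(x,y), (u,v)≠(x,y)} [f(x,y) − f(u,v)]₊ / ‖(u,v)−(x,y)‖_ρ`,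
where `‖(u,v)‖_ρ = max {‖u‖, ρ‖v‖}`. -/
noncomputable def locSlopeRho (f : X × Y → EReal) (ρ : ℝ) (p : X × Y) : ℝ≥0∞ :=
  Filter.limsup
    (fun q => ePlus (f p - f q) / ENNReal.ofReal (max ‖q.1 - p.1‖ (ρ * ‖q.2 - p.2‖)))
    (𝓝[≠] p)

/-- The subdifferential ρ-slope of `f` at `(x,y)`:
`|∂f|_ρ(x,y) := inf {‖x*‖ : (x*,y*) ∈ ∂f(x,y), ‖y*‖ < ρ}` (`inf ∅ = +∞`). -/
noncomputable def sdSlopeRho (f : X × Y → EReal) (ρ : ℝ) (p : X × Y) : ℝ≥0∞ :=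
  ⨅ (l : X × Y →L[ℝ] ℝ)
    (_ : l ∈ frSubdiff f p ∧ ‖l.comp (ContinuousLinearMap.inr ℝ X Y)‖ < ρ),
      (‖l.comp (ContinuousLinearMap.inl ℝ X Y)‖₊ : ℝ≥0∞)

/-! If `l = (x*, y*)` is a Fréchet subgradient of `f` at `p` with `‖y*‖ < ρ²`, then for every
`δ > 0` and `q` near `p` the decrease `f p - f q` is at most `-l (q - p) + δ ‖q - p‖`. Since
`‖y*‖ ‖q₂ - p₂‖ ≤ ρ · ρ ‖q₂ - p₂‖`, we get `-l (q - p) ≤ (‖x*‖ + ρ) ‖q - p‖_ρ`, and the product norm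
is at most `max 1 ρ⁻¹` times the `ρ`-norm; so the `ρ`-slope is at most
`‖x*‖ + ρ + δ · max 1 ρ⁻¹` for every `δ > 0`. -/

lemma ePlus_le_ofReal {x : EReal} {s : ℝ} (h : x ≤ s) : ePlus x ≤ ENNReal.ofReal s := by
  have hx : x ≠ ⊤ := ne_top_of_le_ne_top (EReal.coe_ne_top s) h
  rw [ePlus, if_neg hx]
  induction x using EReal.rec with
  | bot => simp
  | coe a => exact ENNReal.ofReal_le_ofReal (by exact_mod_cast h)
  | top => exact absurd rfl hx

lemma ePlus_sub_le_ofReal_neg {a b : EReal} {r : ℝ} (h : a + r ≤ b) :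
    ePlus (a - b) ≤ ENNReal.ofReal (-r) := by
  refine ePlus_le_ofReal (EReal.sub_le_of_le_add ?_)
  calc a = a + r - r := EReal.add_sub_cancel_right.symm
    _ ≤ b - r := EReal.sub_le_sub h le_rfl
    _ = ((-r : ℝ) : EReal) + b := by rw [sub_eq_add_neg, add_comm, EReal.coe_neg]

section RhoNorm

variable {E F : Type*}

lemma norm_le_max_one_inv_mul_max [SeminormedAddCommGroup E] [SeminormedAddCommGroup F]
    {ρ : ℝ} (hρ : 0 < ρ) (z : E × F) :
    ‖z‖ ≤ max 1 ρ⁻¹ * max ‖z.1‖ (ρ * ‖z.2‖) := by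
  have hM : 0 ≤ max ‖z.1‖ (ρ * ‖z.2‖) := le_max_of_le_left (norm_nonneg _)
  rw [Prod.norm_def]
  refine max_le ?_ ?_
  · calc ‖z.1‖ ≤ 1 * max ‖z.1‖ (ρ * ‖z.2‖) := by rw [one_mul]; exact le_max_left _ _
      _ ≤ _ := by gcongr; exact le_max_left _ _
  · calc ‖z.2‖ = ρ⁻¹ * (ρ * ‖z.2‖) := by field_simp
      _ ≤ _ := by gcongr; exacts [le_max_right _ _, le_max_right _ _]

lemma max_norm_mul_norm_pos [NormedAddCommGroup E] [NormedAddCommGroup F]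
    {ρ : ℝ} (hρ : 0 < ρ) {z : E × F} (hz : z ≠ 0) :
    0 < max ‖z.1‖ (ρ * ‖z.2‖) := by
  rcases eq_or_ne z.1 0 with h1 | h1
  · have h2 : z.2 ≠ 0 := fun h2 => hz (Prod.ext h1 h2)
    exact lt_max_of_lt_right (by positivity)
  · exact lt_max_of_lt_left (norm_pos_iff.mpr h1)

lemma neg_apply_le_mul_max [SeminormedAddCommGroup E] [NormedSpace ℝ E]
    [SeminormedAddCommGroup F] [NormedSpace ℝ F] (l : E × F →L[ℝ] ℝ) {ρ : ℝ} (hρ : 0 ≤ ρ)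
    (hl : ‖l.comp (ContinuousLinearMap.inr ℝ E F)‖ ≤ ρ ^ 2) (z : E × F) :
    -l z ≤ (‖l.comp (ContinuousLinearMap.inl ℝ E F)‖ + ρ) * max ‖z.1‖ (ρ * ‖z.2‖) := by
  set l₁ := l.comp (ContinuousLinearMap.inl ℝ E F)
  set l₂ := l.comp (ContinuousLinearMap.inr ℝ E F)
  have h₁ : -l₁ z.1 ≤ ‖l₁‖ * max ‖z.1‖ (ρ * ‖z.2‖) :=
    calc -l₁ z.1 ≤ ‖l₁ z.1‖ := neg_le_abs _
      _ ≤ ‖l₁‖ * ‖z.1‖ := l₁.le_opNorm _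
      _ ≤ _ := by gcongr; exact le_max_left _ _
  have h₂ : -l₂ z.2 ≤ ρ * max ‖z.1‖ (ρ * ‖z.2‖) :=
    calc -l₂ z.2 ≤ ‖l₂ z.2‖ := neg_le_abs _
      _ ≤ ‖l₂‖ * ‖z.2‖ := l₂.le_opNorm _
      _ ≤ ρ ^ 2 * ‖z.2‖ := by gcongr
      _ = ρ * (ρ * ‖z.2‖) := by ring
      _ ≤ _ := by gcongr; exact le_max_right _ _
  rw [← l.comp_inl_add_comp_inr]
  linarith

end RhoNorm

lemma locSlopeRho_le_ofReal_of_mem_frSubdiff (f : X × Y → EReal) {ρ : ℝ} (hρ : 0 < ρ)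
    {p : X × Y} {l : X × Y →L[ℝ] ℝ} (hl : l ∈ frSubdiff f p)
    (hl₂ : ‖l.comp (ContinuousLinearMap.inr ℝ X Y)‖ ≤ ρ ^ 2) {ε : ℝ} (hε : 0 < ε) :
    locSlopeRho f ρ p ≤
      ENNReal.ofReal (‖l.comp (ContinuousLinearMap.inl ℝ X Y)‖ + ρ + ε) := by
  set c := max 1 ρ⁻¹
  have hc : 0 < c := lt_max_of_lt_left one_pos
  refine limsup_le_of_le (by isBoundedDefault) ?_
  filter_upwards [hl.2 (ε / c) (by positivity), self_mem_nhdsWithin] with q hq hqp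
  have hM := max_norm_mul_norm_pos hρ (sub_ne_zero.mpr hqp)
  have hl_le := neg_apply_le_mul_max l hρ.le hl₂ (q - p)
  have hnorm := norm_le_max_one_inv_mul_max hρ (q - p)
  simp only [Prod.fst_sub, Prod.snd_sub] at hM hl_le hnorm
  refine ENNReal.div_le_of_le_mul ?_
  rw [← ENNReal.ofReal_mul (by positivity)]
  refine (ePlus_sub_le_ofReal_neg hq).trans (ENNReal.ofReal_le_ofReal ?_)
  have : ε / c * ‖q - p‖ ≤ ε * max ‖q.1 - p.1‖ (ρ * ‖q.2 - p.2‖) :=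
    calc ε / c * ‖q - p‖ ≤ ε / c * (c * max ‖q.1 - p.1‖ (ρ * ‖q.2 - p.2‖)) := by gcongr
      _ = _ := by field_simp
  linarith

lemma locSlopeRho_le_of_mem_frSubdiff (f : X × Y → EReal) {ρ : ℝ} (hρ : 0 < ρ)
    {p : X × Y} {l : X × Y →L[ℝ] ℝ} (hl : l ∈ frSubdiff f p)
    (hl₂ : ‖l.comp (ContinuousLinearMap.inr ℝ X Y)‖ ≤ ρ ^ 2) :
    locSlopeRho f ρ p ≤ ‖l.comp (ContinuousLinearMap.inl ℝ X Y)‖₊ + ENNReal.ofReal ρ := by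
  refine ENNReal.le_of_forall_pos_le_add fun ε hε _ => ?_
  calc locSlopeRho f ρ p
      ≤ ENNReal.ofReal (‖l.comp (ContinuousLinearMap.inl ℝ X Y)‖ + ρ + ε) :=
        locSlopeRho_le_ofReal_of_mem_frSubdiff f hρ hl hl₂ (by exact_mod_cast hε)
    _ = _ := by
        rw [ENNReal.ofReal_add (by positivity) ε.coe_nonneg,
          ENNReal.ofReal_add (norm_nonneg _) hρ.le, ofReal_norm, enorm_eq_nnnorm,
          ENNReal.ofReal_coe_nnreal]

theorem locSlopeRho_le_sdSlopeRho_add_general (f : X × Y → EReal)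
    (ρ : ℝ) (hρ : 0 < ρ) (p : X × Y) :
    locSlopeRho f ρ p ≤ sdSlopeRho f (ρ ^ 2) p + ENNReal.ofReal ρ := by
  simp only [sdSlopeRho, ENNReal.iInf_add]
  exact le_iInf₂ fun l hl => locSlopeRho_le_of_mem_frSubdiff f hρ hl.1 hl.2.le

/-- for every `ρ > 0` and every `(x,y)` with `f(x,y) < +∞`,
`|∇f|_ρ(x,y) ≤ |∂f|_{ρ²}(x,y) + ρ`. -/
theorem locSlopeRho_le_sdSlopeRho_add (f : X × Y → EReal) (hbot : ∀ p, f p ≠ ⊥)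
    (ρ : ℝ) (hρ : 0 < ρ) (p : X × Y) (hfin : f p ≠ ⊤) :
    locSlopeRho f ρ p ≤ sdSlopeRho f (ρ ^ 2) p + ENNReal.ofReal ρ :=
  locSlopeRho_le_sdSlopeRho_add_general f ρ hρ p
end

section
/- Let X and Y be complete metric spaces, f : X×Y → ℝ ∪ {+∞} with f(x̄,ȳ) = 0 satisfying (P1) and (P2). If f_+ is lower semicontinuous (in the product topology) on a neighbourhood of (x̄,ȳ), then Er f(x̄,ȳ) = \overline{|∇f|}^◇(x̄,ȳ). -/
open Filter Metric Topology ENNReal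

variable {X Y : Type*} [MetricSpace X] [MetricSpace Y] [CompleteSpace X] [CompleteSpace Y]

/-- The error bound modulus `Er f(x̄,ȳ) := liminf_{x→x̄, f(x,y)>0} f(x,y)/d(x,S(f))`,
with `S(f) = {x : f(x,ȳ) ≤ 0}`. -/
noncomputable def erMod2 (f : X × Y → EReal) (x₀ : X) (y₀ : Y) : ℝ≥0∞ :=
  ⨆ (δ : ℝ) (_ : 0 < δ),
    ⨅ (p : X × Y) (_ : dist p.1 x₀ < δ ∧ 0 < f p),
      ePlus (f p) / EMetric.infEdist p.1 {x | f (x, y₀) ≤ 0}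

/-!
If the error bound holds with constant `b`, a point `p` near `(x̄, ȳ)` with `0 < f p` small lies,
in the `x`-variable, within about `f p / b` of a point `u` of `S(f)`, and by (P2) its `y`-coordinate
lies within `f p / c` of `ȳ`. For `ρ ≤ c / b` the zero `(u, ȳ)` of `f` is then `d_ρ`-close enough
to `p` to force `|∇f|^◇_ρ(p) ≥ b`.

Conversely, if the error bound fails at `p` for a constant `b < ε`, Ekeland's variational
principle for `f₊` on a closed sublevel set inside a ball where `f₊` is lower semicontinuous, in
the metric `d_ρ` and with constant `ε`, yields a point `w` whose `ρ`-slope is at most `ε`. The point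
`w` is closer to `p` than `S(f)` is, so `f w > 0` by (P1), and `w` is admissible in the definition
of the uniform strict slope, which is therefore at most `ε`.
-/

lemma exists_pos_lt_of_lt_iSup_pos {L : Type*} [CompleteLinearOrder L] {a : L} {g : ℝ → L}
    (h : a < ⨆ (δ : ℝ) (_ : 0 < δ), g δ) : ∃ δ > 0, a < g δ := by
  simpa only [lt_iSup_iff, exists_prop] using h

lemma eventually_mul_lt_nhdsGT (k : ℝ) {m : ℝ} (hm : 0 < m) : ∀ᶠ δ in 𝓝[>] (0 : ℝ), k * δ < m :=
  nhdsWithin_le_nhds <|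
    ((continuous_const.mul continuous_id).tendsto' 0 0 (by simp)).eventually_lt_const hm

lemma LowerSemicontinuousOn.isClosed_inter_preimage_Iic {α γ : Type*} [TopologicalSpace α]
    [LinearOrder γ] {f : α → γ} {s : Set α} (hf : LowerSemicontinuousOn f s) (hs : IsClosed s)
    (c : γ) : IsClosed (s ∩ f ⁻¹' Set.Iic c) := by
  obtain ⟨v, hv, hsv⟩ := lowerSemicontinuousOn_iff_preimage_Iic.1 hf c
  rw [hsv]
  exact hs.inter hv

lemma LowerSemicontinuousOn.toReal {α : Type*} [TopologicalSpace α] {g : α → EReal} {s : Set α}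
    (hg : LowerSemicontinuousOn g s) (hfin : ∀ x ∈ s, g x ≠ ⊤ ∧ g x ≠ ⊥) :
    LowerSemicontinuousOn (fun x => (g x).toReal) s := by
  intro z hz r hr
  have hrz : (r : EReal) < g z := by
    rw [← EReal.coe_toReal (hfin z hz).1 (hfin z hz).2]
    exact_mod_cast hr
  filter_upwards [hg z hz r hrz, self_mem_nhdsWithin] with q hq hqs
  rw [← EReal.coe_toReal (hfin q hqs).1 (hfin q hqs).2] at hq
  exact_mod_cast hq

lemma le_of_forall_pos_ofReal_lt {a b : ℝ≥0∞}
    (h : ∀ r : ℝ, 0 < r → ENNReal.ofReal r < a → ENNReal.ofReal r ≤ b) : a ≤ b := by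
  refine le_of_forall_lt fun c hc => ?_
  obtain ⟨r, -, hcr, hra⟩ := ENNReal.lt_iff_exists_real_btwn.1 hc
  exact hcr.trans_le (h r (ENNReal.ofReal_pos.1 (zero_le.trans_lt hcr)) hra)

lemma ofReal_lt_ofReal_div_ofReal_iff {b t d : ℝ} (hb : 0 ≤ b) (ht : 0 < t) :
    ENNReal.ofReal b < ENNReal.ofReal t / ENNReal.ofReal d ↔ b * d < t := by
  rw [ENNReal.lt_div_iff_mul_lt (Or.inr ofReal_ne_top) (Or.inl ofReal_ne_top),
    ← ENNReal.ofReal_mul hb, ENNReal.ofReal_lt_ofReal_iff ht]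

lemma ofReal_le_ofReal_div_ofReal_iff {b t d : ℝ} (hb : 0 ≤ b) (ht : 0 < t) :
    ENNReal.ofReal b ≤ ENNReal.ofReal t / ENNReal.ofReal d ↔ b * d ≤ t := by
  rw [ENNReal.le_div_iff_mul_le (Or.inr (ENNReal.ofReal_pos.2 ht).ne') (Or.inl ofReal_ne_top),
    ← ENNReal.ofReal_mul hb, ENNReal.ofReal_le_ofReal_iff ht.le]

lemma ofReal_infDist {α : Type*} [PseudoMetricSpace α] {x : α} {s : Set α} (hs : s.Nonempty) :
    ENNReal.ofReal (infDist x s) = EMetric.infEdist x s :=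
  ENNReal.ofReal_toReal (infEDist_ne_top hs)

lemma exists_forall_le_add_of_bddBelow {α : Type*} {F : α → ℝ} {s : Set α} (hs : s.Nonempty)
    (hF : BddBelow (F '' s)) {η : ℝ} (hη : 0 < η) : ∃ w ∈ s, ∀ q ∈ s, F w ≤ F q + η := by
  obtain ⟨_, ⟨w, hw, rfl⟩, hlt⟩ := Real.lt_sInf_add_pos (hs.image F) hη
  exact ⟨w, hw, fun q hq => by linarith [csInf_le hF (Set.mem_image_of_mem F hq)]⟩

lemma ePlus_coe (r : ℝ) : ePlus r = ENNReal.ofReal r := by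
  simp [ePlus]

lemma ePlus_top : ePlus ⊤ = ⊤ := if_pos rfl

lemma ePlus_mono : Monotone ePlus := by
  intro a b hab
  by_cases hb : b = ⊤
  · simp [ePlus, hb]
  have ha : a ≠ ⊤ := ne_top_of_le_ne_top hb hab
  by_cases ha' : a = ⊥
  · simp [ePlus, ha']
  simp only [ePlus, ha, hb, if_false]
  exact ENNReal.ofReal_le_ofReal (EReal.toReal_le_toReal hab ha' hb)

lemma max_zero_ne_bot (a : EReal) : max a 0 ≠ ⊥ :=
  ne_bot_of_le_ne_bot EReal.zero_ne_bot (le_max_right a 0)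

section Ekeland

variable {α : Type*} {C : Set α} {F : α → ℝ} {d : α → α → ℝ} {ε : ℝ}

def ekelandSet (C : Set α) (F : α → ℝ) (d : α → α → ℝ) (ε : ℝ) (z : α) : Set α :=
  {q ∈ C | F q + ε * d z q ≤ F z}

lemma self_mem_ekelandSet (hd : ∀ p, d p p = 0) {z : α} (hz : z ∈ C) :
    z ∈ ekelandSet C F d ε z :=
  ⟨hz, by simp [hd]⟩

lemma ekelandSet_subset (hε : 0 ≤ ε) (htri : ∀ p q r, d p r ≤ d p q + d q r) {z w : α}
    (hw : w ∈ ekelandSet C F d ε z) : ekelandSet C F d ε w ⊆ ekelandSet C F d ε z := by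
  rintro q ⟨hqC, hq⟩
  refine ⟨hqC, ?_⟩
  have := mul_le_mul_of_nonneg_left (htri z w q) hε
  linarith [hw.2]

lemma isClosed_ekelandSet [TopologicalSpace α] (hC : IsClosed C) (hF : LowerSemicontinuousOn F C)
    {z : α} (hd : Continuous (d z)) : IsClosed (ekelandSet C F d ε z) :=
  (hF.add (continuous_const.mul hd).continuousOn.lowerSemicontinuousOn).isClosed_inter_preimage_Iic
    hC (F z)

lemma exists_seq_mem_ekelandSet (hd : ∀ p, d p p = 0) (hF : BddBelow (F '' C)) {p : α}
    (hp : p ∈ C) : ∃ u : ℕ → α, u 0 = p ∧ ∀ n, u (n + 1) ∈ ekelandSet C F d ε (u n) ∧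
      ∀ q ∈ ekelandSet C F d ε (u n), F (u (n + 1)) ≤ F q + (1 / 2) ^ n := by
  have step : ∀ (n : ℕ) (z : C), ∃ w : C, (w : α) ∈ ekelandSet C F d ε z ∧
      ∀ q ∈ ekelandSet C F d ε z, F w ≤ F q + (1 / 2) ^ n := fun n z => by
    obtain ⟨w, hw, hmin⟩ := exists_forall_le_add_of_bddBelow ⟨z.1, self_mem_ekelandSet hd z.2⟩
      (hF.mono (Set.image_mono fun q hq => hq.1)) (by positivity : (0 : ℝ) < (1 / 2) ^ n)
    exact ⟨⟨w, hw.1⟩, hw, hmin⟩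
  choose g hg using step
  let v : ℕ → C := fun n => Nat.rec ⟨p, hp⟩ g n
  let u : ℕ → α := fun n => (v n).1
  exact ⟨u, rfl, fun n => hg n (v n)⟩

lemma mem_ekelandSet_of_le (hε : 0 ≤ ε) (hd : ∀ p, d p p = 0)
    (htri : ∀ p q r, d p r ≤ d p q + d q r) {u : ℕ → α} (hu0 : u 0 ∈ C)
    (hu : ∀ n, u (n + 1) ∈ ekelandSet C F d ε (u n)) {n m : ℕ} (hnm : n ≤ m) :
    u m ∈ ekelandSet C F d ε (u n) := by
  induction m, hnm using Nat.le_induction with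
  | base =>
    refine self_mem_ekelandSet hd ?_
    cases n with
    | zero => exact hu0
    | succ k => exact (hu k).1
  | succ m _ ih => exact ekelandSet_subset hε htri ih (hu m)

lemma cauchySeq_of_mem_ekelandSet [PseudoMetricSpace α] (hε : 0 < ε) {κ : ℝ} (hκ : 0 < κ)
    (hdist : ∀ p q, κ * dist p q ≤ d p q) (hF : BddBelow (F '' C)) {u : ℕ → α}
    (hu : ∀ n m, n ≤ m → u m ∈ ekelandSet C F d ε (u n)) : CauchySeq u := by
  have hdec : ∀ n m, n ≤ m → κ * ε * dist (u n) (u m) ≤ F (u n) - F (u m) := fun n m hnm => by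
    have := mul_le_mul_of_nonneg_left (hdist (u n) (u m)) hε.le
    linarith [(hu n m hnm).2]
  have hanti : Antitone fun n => F (u n) := antitone_nat_of_succ_le fun n => by
    have := mul_nonneg (mul_nonneg hκ.le hε.le) (dist_nonneg (x := u n) (y := u (n + 1)))
    linarith [hdec n (n + 1) n.le_succ]
  have hbdd : BddBelow (Set.range fun n => F (u n)) :=
    hF.mono (Set.range_subset_iff.2 fun n => Set.mem_image_of_mem F (hu 0 n n.zero_le).1)
  obtain ⟨L, hL⟩ : ∃ L, Tendsto (fun n => F (u n)) atTop (𝓝 L) :=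
    ⟨_, tendsto_atTop_ciInf hanti hbdd⟩
  have hlim : Tendsto (fun N => (F (u N) - L) / (κ * ε)) atTop (𝓝 0) := by
    simpa using (hL.sub_const L).div_const (κ * ε)
  refine cauchySeq_of_le_tendsto_0 _ (fun n m N hn hm => ?_) hlim
  rw [le_div_iff₀ (by positivity)]
  wlog hnm : n ≤ m generalizing n m
  · rw [dist_comm]; exact this m n hm hn (le_of_not_ge hnm)
  linarith [hdec n m hnm, hanti hn, hanti.le_of_tendsto hL m]

/-- Ekeland's variational principle, with the perturbation measured by a gauge `d` that need not be
the metric: it is applied with `d = dRho ρ`, which is only equivalent to the product metric. -/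
theorem exists_ekeland_point [PseudoMetricSpace α] [CompleteSpace α] (hC : IsClosed C)
    (hF : LowerSemicontinuousOn F C) (hFb : BddBelow (F '' C)) (hd : ∀ p, d p p = 0)
    (htri : ∀ p q r, d p r ≤ d p q + d q r) (hcont : ∀ p, Continuous (d p)) {κ : ℝ}
    (hκ : 0 < κ) (hdist : ∀ p q, κ * dist p q ≤ d p q) (hε : 0 < ε) {p : α} (hp : p ∈ C) :
    ∃ w ∈ C, F w + ε * d p w ≤ F p ∧ ∀ q ∈ C, F w ≤ F q + ε * d w q := by
  have hd_nonneg : ∀ p q, 0 ≤ d p q := fun p q =>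
    (mul_nonneg hκ.le dist_nonneg).trans (hdist p q)
  obtain ⟨u, rfl, hu⟩ := exists_seq_mem_ekelandSet (ε := ε) hd hFb hp
  have hmem : ∀ n m, n ≤ m → u m ∈ ekelandSet C F d ε (u n) := fun n m =>
    mem_ekelandSet_of_le hε.le hd htri hp (fun n => (hu n).1)
  obtain ⟨w, hlim⟩ := cauchySeq_tendsto_of_complete
    (cauchySeq_of_mem_ekelandSet hε hκ hdist hFb hmem)
  have hw : ∀ n, w ∈ ekelandSet C F d ε (u n) := fun n =>
    (isClosed_ekelandSet hC hF (hcont (u n))).mem_of_tendsto hlim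
      (eventually_atTop.2 ⟨n, fun m => hmem n m⟩)
  refine ⟨w, (hw 0).1, (hw 0).2, fun q hq => ?_⟩
  by_cases hqS : q ∈ ekelandSet C F d ε w
  · have hclose : ∀ n : ℕ, F w ≤ F q + (1 / 2) ^ n := fun n => by
      have := (hu n).2 q (ekelandSet_subset hε.le htri (hw n) hqS)
      nlinarith [(hw (n + 1)).2, hd_nonneg (u (n + 1)) w]
    have hpow : Tendsto (fun n : ℕ => F q + (1 / 2 : ℝ) ^ n) atTop (𝓝 (F q)) := by
      simpa using tendsto_const_nhds.add
        (tendsto_pow_atTop_nhds_zero_of_lt_one (r := (1 / 2 : ℝ)) (by norm_num) (by norm_num))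
    have hFwq : F w ≤ F q := ge_of_tendsto' hpow hclose
    nlinarith [hd_nonneg w q]
  · exact (not_le.1 fun h => hqS ⟨hq, h⟩).le

end Ekeland

section RhoMetric

variable {α β : Type*} [MetricSpace α] [MetricSpace β] {ρ : ℝ}

lemma dRho_self (ρ : ℝ) (p : α × β) : dRho ρ p p = 0 := by
  simp [dRho]

lemma dist_fst_le_dRho (p q : α × β) : dist p.1 q.1 ≤ dRho ρ p q := le_max_left _ _

lemma dRho_lt_iff {p q : α × β} {s : ℝ} :
    dRho ρ p q < s ↔ dist p.1 q.1 < s ∧ ρ * dist p.2 q.2 < s := max_lt_iff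

lemma dRho_nonneg (p q : α × β) : 0 ≤ dRho ρ p q := dist_nonneg.trans (dist_fst_le_dRho p q)

lemma dRho_triangle (hρ : 0 ≤ ρ) (p q r : α × β) : dRho ρ p r ≤ dRho ρ p q + dRho ρ q r := by
  refine max_le ((dist_triangle _ _ _).trans (add_le_add (le_max_left _ _) (le_max_left _ _))) ?_
  calc ρ * dist p.2 r.2 ≤ ρ * dist p.2 q.2 + ρ * dist q.2 r.2 := by
        rw [← mul_add]; exact mul_le_mul_of_nonneg_left (dist_triangle _ _ _) hρ
    _ ≤ dRho ρ p q + dRho ρ q r := add_le_add (le_max_right _ _) (le_max_right _ _)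

lemma min_one_mul_dist_le_dRho (hρ : 0 ≤ ρ) (p q : α × β) : min 1 ρ * dist p q ≤ dRho ρ p q := by
  rw [Prod.dist_eq, mul_max_of_nonneg _ _ (le_min zero_le_one hρ)]
  exact max_le_max (mul_le_of_le_one_left dist_nonneg (min_le_left _ _))
    (mul_le_mul_of_nonneg_right (min_le_right _ _) dist_nonneg)

lemma continuous_dRho (ρ : ℝ) (p : α × β) : Continuous (dRho ρ p) :=
  (continuous_const.dist continuous_fst).max
    (continuous_const.mul (continuous_const.dist continuous_snd))

lemma le_nlSlopeRho {f : α × β → EReal} {p q : α × β} (hqp : q ≠ p) (hq : f q ≤ 0) :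
    ePlus (f p) / ENNReal.ofReal (dRho ρ p q) ≤ nlSlopeRho f ρ p := by
  refine le_iSup₂_of_le q hqp ?_
  rw [max_eq_right hq, sub_zero]

lemma nlSlopeRho_le_ofReal {f : α × β → EReal} {ε a : ℝ} {w : α × β} (hw : f w ≤ a)
    (h : ∀ q ≠ w, ∀ s : ℝ, max (f q) 0 = s → a - s ≤ ε * dRho ρ w q) :
    nlSlopeRho f ρ w ≤ ENNReal.ofReal ε := by
  refine iSup₂_le fun q hq => ENNReal.div_le_of_le_mul ?_
  rw [← ENNReal.ofReal_mul' (dRho_nonneg w q)]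
  by_cases htop : max (f q) 0 = ⊤
  · simp [htop, EReal.sub_top, ePlus]
  set s := (max (f q) 0).toReal
  have hs : max (f q) 0 = s := (EReal.coe_toReal htop (max_zero_ne_bot _)).symm
  calc ePlus (f w - max (f q) 0) ≤ ePlus ((a - s : ℝ) : EReal) :=
        ePlus_mono (by rw [hs, EReal.coe_sub]; exact EReal.sub_le_sub hw le_rfl)
    _ ≤ ENNReal.ofReal (ε * dRho ρ w q) := by
        rw [ePlus_coe]; exact ENNReal.ofReal_le_ofReal (h q hq s hs)

end RhoMetric

lemma exists_mul_dist_lt_of_pos_growth {α β : Type*} [PseudoMetricSpace β] {f : α × β → EReal}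
    {y₀ : β} (h : 0 < ⨆ (δ : ℝ) (_ : 0 < δ), ⨅ (p : α × β) (_ : 0 < f p ∧ f p < (δ : EReal)),
      ePlus (f p) / ENNReal.ofReal (dist p.2 y₀)) :
    ∃ δ > 0, ∃ c > 0, ∀ p (t : ℝ), f p = t → 0 < t → t < δ → c * dist p.2 y₀ < t := by
  obtain ⟨δ, hδ, hinf⟩ := exists_pos_lt_of_lt_iSup_pos h
  obtain ⟨c, -, hc, hcinf⟩ := ENNReal.lt_iff_exists_real_btwn.1 hinf
  refine ⟨δ, hδ, c, ENNReal.ofReal_pos.1 hc, fun p t hfp ht htδ => ?_⟩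
  have hp : 0 < f p ∧ f p < (δ : EReal) := by rw [hfp]; exact ⟨mod_cast ht, mod_cast htδ⟩
  have := hcinf.trans_le (iInf₂_le p hp)
  rwa [hfp, ePlus_coe, ofReal_lt_ofReal_div_ofReal_iff (ENNReal.ofReal_pos.1 hc).le ht] at this

section Slopes

variable {α β : Type*} [MetricSpace α] [MetricSpace β]

/-- Ekeland's principle for `f₊` on `B ∩ {f₊ ≤ t}`. Competitors outside this set cannot raise the
slope at the Ekeland point: those with `f₊ > t` are higher, and `hball` puts those outside `B`
too far from `p`. -/
theorem exists_nlSlopeRho_le_ofReal [CompleteSpace α] [CompleteSpace β] {f : α × β → EReal}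
    {B : Set (α × β)} (hB : IsClosed B) (hf : LowerSemicontinuousOn (fun q => max (f q) 0) B)
    {ρ ε t : ℝ} (hρ : 0 < ρ) (hε : 0 < ε) (ht : 0 ≤ t) {p : α × β} (hfp : f p ≤ t)
    (hball : ∀ q, ε * dRho ρ p q ≤ 2 * t → q ∈ B) :
    ∃ w, ε * dRho ρ p w ≤ t ∧ f w ≤ t ∧ nlSlopeRho f ρ w ≤ ENNReal.ofReal ε := by
  set C := B ∩ (fun q => max (f q) 0) ⁻¹' Set.Iic (t : EReal)
  set F := fun q => (max (f q) 0).toReal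
  have hfin : ∀ q ∈ C, max (f q) 0 ≠ ⊤ ∧ max (f q) 0 ≠ ⊥ := fun q hq =>
    ⟨(hq.2.trans_lt (EReal.coe_lt_top t)).ne, max_zero_ne_bot _⟩
  have hFC : ∀ q ∈ C, max (f q) 0 = F q ∧ 0 ≤ F q ∧ F q ≤ t := fun q hq => by
    have hq' := (EReal.coe_toReal (hfin q hq).1 (hfin q hq).2).symm
    refine ⟨hq', ?_, ?_⟩
    · exact_mod_cast hq' ▸ le_max_right (f q) 0
    · have hqt : max (f q) 0 ≤ (t : EReal) := hq.2
      rw [hq'] at hqt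
      exact_mod_cast hqt
  have hpC : p ∈ C := ⟨hball p (by simp [dRho_self]; positivity), max_le hfp (mod_cast ht)⟩
  obtain ⟨w, hwC, hpw, hmin⟩ := exists_ekeland_point (hf.isClosed_inter_preimage_Iic hB t)
    ((hf.mono Set.inter_subset_left).toReal hfin)
    ⟨0, Set.forall_mem_image.2 fun q hq => (hFC q hq).2.1⟩ (dRho_self ρ) (dRho_triangle hρ.le)
    (continuous_dRho ρ) (lt_min one_pos hρ) (min_one_mul_dist_le_dRho hρ.le) hε hpC
  replace hpw : F w + ε * dRho ρ p w ≤ F p := hpw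
  replace hmin : ∀ q ∈ C, F w ≤ F q + ε * dRho ρ w q := hmin
  obtain ⟨hw, hw0, hwt⟩ := hFC w hwC
  refine ⟨w, by linarith [(hFC p hpC).2.2], (le_max_left _ _).trans hwC.2,
    nlSlopeRho_le_ofReal (a := F w) (hw ▸ le_max_left _ _) fun q _ s hs => ?_⟩
  have hs0 : 0 ≤ s := by exact_mod_cast hs ▸ le_max_right (f q) 0
  by_cases hqC : q ∈ C
  · have hFq : F q = s := by exact_mod_cast (hFC q hqC).1.symm.trans hs
    linarith [hmin q hqC]
  rcases not_and_or.1 hqC with hqB | hqt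
  · have hfar : 2 * t < ε * dRho ρ p q := lt_of_not_ge fun h => hqB (hball q h)
    have := mul_le_mul_of_nonneg_left (dRho_triangle hρ.le p w q) hε.le
    rw [mul_add] at this
    linarith [(hFC p hpC).2.2]
  · have hts : t < s := by
      have : (t : EReal) < s := hs ▸ lt_of_not_ge hqt
      exact_mod_cast this
    nlinarith [dRho_nonneg (ρ := ρ) w q]

theorem erMod2_le_uStrictSlope2 {f : α × β → EReal} {x₀ : α} {y₀ : β} (hf₀ : f (x₀, y₀) = 0)
    (hP2 : 0 < ⨆ (δ : ℝ) (_ : 0 < δ), ⨅ (p : α × β) (_ : 0 < f p ∧ f p < (δ : EReal)),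
      ePlus (f p) / ENNReal.ofReal (dist p.2 y₀)) :
    erMod2 f x₀ y₀ ≤ uStrictSlope2 f x₀ := by
  obtain ⟨δ₂, hδ₂, c, hc, hgrowth⟩ := exists_mul_dist_lt_of_pos_growth hP2
  set S := {x | f (x, y₀) ≤ 0}
  have hS : S.Nonempty := ⟨x₀, hf₀.le⟩
  refine le_of_forall_pos_ofReal_lt fun b hb hbEr => ?_
  obtain ⟨δ, hδ, hEr⟩ := exists_pos_lt_of_lt_iSup_pos hbEr
  set ρ := min δ (min δ₂ (c / b))
  have hρ : 0 < ρ := lt_min hδ (lt_min hδ₂ (div_pos hc hb))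
  have hbρ : b * ρ ≤ c := (le_div_iff₀' hb).1 ((min_le_right _ _).trans (min_le_right _ _))
  refine le_iSup₂_of_le ρ hρ (le_iInf₂ fun p ⟨hpx, hfp0, hfpρ⟩ => ?_)
  set t := (f p).toReal
  have hfp : f p = t :=
    (EReal.coe_toReal (hfpρ.trans (EReal.coe_lt_top ρ)).ne (ne_bot_of_gt hfp0)).symm
  have ht : 0 < t := by rw [hfp] at hfp0; exact_mod_cast hfp0
  have htρ : t < ρ := by rw [hfp] at hfpρ; exact_mod_cast hfpρ
  have hbS : b * infDist p.1 S < t := by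
    have := hEr.trans_le (iInf₂_le p ⟨hpx.trans_le (min_le_left _ _), hfp0⟩)
    rwa [hfp, ePlus_coe, ← ofReal_infDist hS, ofReal_lt_ofReal_div_ofReal_iff hb.le ht] at this
  obtain ⟨u, huS, hu⟩ := (infDist_lt_iff hS).1 (show infDist p.1 S < t / b by
    rw [lt_div_iff₀' hb]; exact hbS)
  have hy := hgrowth p t hfp ht (htρ.trans_le ((min_le_right _ _).trans (min_le_left _ _)))
  have hD : b * dRho ρ p (u, y₀) ≤ t := by
    rw [dRho, mul_max_of_nonneg _ _ hb.le]
    refine max_le (by rw [lt_div_iff₀' hb] at hu; exact hu.le) ?_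
    calc b * (ρ * dist p.2 y₀) = b * ρ * dist p.2 y₀ := (mul_assoc _ _ _).symm
      _ ≤ c * dist p.2 y₀ := mul_le_mul_of_nonneg_right hbρ dist_nonneg
      _ ≤ t := hy.le
  have hup : (u, y₀) ≠ p := fun h => (h ▸ hfp0).not_ge huS
  calc ENNReal.ofReal b ≤ ENNReal.ofReal t / ENNReal.ofReal (dRho ρ p (u, y₀)) :=
        (ofReal_le_ofReal_div_ofReal_iff hb.le ht).2 hD
    _ = ePlus (f p) / ENNReal.ofReal (dRho ρ p (u, y₀)) := by rw [hfp, ePlus_coe]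
    _ ≤ nlSlopeRho f ρ p := le_nlSlopeRho hup huS

theorem exists_admissible_nlSlopeRho_le [CompleteSpace α] [CompleteSpace β] {f : α × β → EReal}
    {x₀ : α} {y₀ : β} (hf₀ : f (x₀, y₀) = 0) (hP1 : ∀ x y, y ≠ y₀ → 0 < f (x, y))
    {δ₂ c R : ℝ} (hδ₂ : 0 < δ₂) (hc : 0 < c)
    (hgrowth : ∀ p (t : ℝ), f p = t → 0 < t → t < δ₂ → c * dist p.2 y₀ < t) (hR : 0 < R)
    (hlsc : LowerSemicontinuousOn (fun p => max (f p) 0) (closedBall (x₀, y₀) R))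
    {ρ b ε : ℝ} (hρ : 0 < ρ) (hb : 0 < b) (hbε : b < ε) :
    ∃ δ > 0, ∀ p : α × β, ∀ t : ℝ, dist p.1 x₀ < δ → f p = t → 0 < t →
      t < b * infDist p.1 {x | f (x, y₀) ≤ 0} →
      ∃ w, dist w.1 x₀ < ρ ∧ 0 < f w ∧ f w < ρ ∧ nlSlopeRho f ρ w ≤ ENNReal.ofReal ε := by
  have hε : 0 < ε := hb.trans hbε
  obtain ⟨δ, ⟨hδ₂', hδρ, hbδρ, hδR, hδρR, hbδR⟩, hδ⟩ :=
    ((eventually_mul_lt_nhdsGT b hδ₂).and <| (eventually_mul_lt_nhdsGT 2 hρ).and <|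
      (eventually_mul_lt_nhdsGT b hρ).and <| (eventually_mul_lt_nhdsGT 3 hR).and <|
      (eventually_mul_lt_nhdsGT 4 (mul_pos hρ hR)).and <|
      (eventually_mul_lt_nhdsGT (2 * b) (mul_pos hc hR))).and self_mem_nhdsWithin |>.exists
  refine ⟨δ, hδ, fun p t hpx hfp ht hlt => ?_⟩
  set S := {x | f (x, y₀) ≤ 0}
  have hSδ : infDist p.1 S < δ := (infDist_le_dist_of_mem (show x₀ ∈ S from hf₀.le)).trans_lt hpx
  have htδ : t < b * δ := hlt.trans (mul_lt_mul_of_pos_left hSδ hb)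
  have htεδ : t < ε * δ := htδ.trans (mul_lt_mul_of_pos_right hbε hδ)
  have hy := hgrowth p t hfp ht (htδ.trans hδ₂')
  have hball : ∀ q, ε * dRho ρ p q ≤ 2 * t → q ∈ closedBall (x₀, y₀) R := fun q hq => by
    obtain ⟨hx, hy'⟩ := dRho_lt_iff.1 <|
      lt_of_mul_lt_mul_left (show ε * dRho ρ p q < ε * (2 * δ) by linarith) hε.le
    have hyq : dist p.2 q.2 < R / 2 := lt_of_mul_lt_mul_left (by linarith) hρ.le
    have hy₀ : dist p.2 y₀ < R / 2 := lt_of_mul_lt_mul_left (by linarith) hc.le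
    rw [mem_closedBall, Prod.dist_eq, max_le_iff]
    constructor
    · linarith [dist_triangle q.1 p.1 x₀, dist_comm q.1 p.1]
    · linarith [dist_triangle q.2 p.2 y₀, dist_comm q.2 p.2]
  obtain ⟨w, hpw, hfw, hslope⟩ :=
    exists_nlSlopeRho_le_ofReal isClosed_closedBall hlsc hρ hε ht.le hfp.le hball
  have hpw₁ : dist p.1 w.1 < infDist p.1 S := lt_of_mul_lt_mul_left
    ((mul_le_mul_of_nonneg_left (dist_fst_le_dRho p w) hε.le).trans hpw |>.trans_lt
      (hlt.trans_le (mul_le_mul_of_nonneg_right hbε.le infDist_nonneg))) hε.le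
  have hwS : w.1 ∉ S := fun h => (infDist_le_dist_of_mem h).not_gt hpw₁
  have hfw0 : 0 < f w := by
    by_cases hw₂ : w.2 = y₀
    · exact (Prod.ext rfl hw₂.symm : (w.1, y₀) = w) ▸ lt_of_not_ge hwS
    · exact hP1 w.1 w.2 hw₂
  refine ⟨w, ?_, hfw0, hfw.trans_lt (mod_cast htδ.trans hbδρ), hslope⟩
  linarith [dist_triangle w.1 p.1 x₀, dist_comm w.1 p.1]

theorem uStrictSlope2_le_erMod2 [CompleteSpace α] [CompleteSpace β] {f : α × β → EReal} {x₀ : α}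
    {y₀ : β} (hbot : ∀ p, f p ≠ ⊥) (hf₀ : f (x₀, y₀) = 0) (hP1 : ∀ x y, y ≠ y₀ → 0 < f (x, y))
    (hP2 : 0 < ⨆ (δ : ℝ) (_ : 0 < δ), ⨅ (p : α × β) (_ : 0 < f p ∧ f p < (δ : EReal)),
      ePlus (f p) / ENNReal.ofReal (dist p.2 y₀))
    (hlsc : ∃ U ∈ 𝓝 (x₀, y₀), LowerSemicontinuousOn (fun p => max (f p) 0) U) :
    uStrictSlope2 f x₀ ≤ erMod2 f x₀ y₀ := by
  obtain ⟨δ₂, hδ₂, c, hc, hgrowth⟩ := exists_mul_dist_lt_of_pos_growth hP2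
  obtain ⟨U, hU, hlscU⟩ := hlsc
  obtain ⟨R, hR, hRU⟩ := Metric.mem_nhds_iff.1 hU
  have hlscB := hlscU.mono ((closedBall_subset_ball (half_lt_self hR)).trans hRU)
  have hS : {x | f (x, y₀) ≤ 0}.Nonempty := ⟨x₀, hf₀.le⟩
  refine le_of_forall_pos_ofReal_lt fun b hb hbslope => ?_
  obtain ⟨ρ, hρ, hslope⟩ := exists_pos_lt_of_lt_iSup_pos hbslope
  obtain ⟨ε, -, hbε, hεslope⟩ := ENNReal.lt_iff_exists_real_btwn.1 hslope
  obtain ⟨δ, hδ, hwit⟩ := exists_admissible_nlSlopeRho_le hf₀ hP1 hδ₂ hc hgrowth (half_pos hR)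
    hlscB hρ hb ((ENNReal.ofReal_lt_ofReal_iff'.1 hbε).1)
  refine le_iSup₂_of_le δ hδ (le_iInf₂ fun p ⟨hpx, hfp0⟩ => ?_)
  by_cases htop : f p = ⊤
  · rw [htop, ePlus_top, ← ofReal_infDist hS, ENNReal.top_div_of_ne_top ofReal_ne_top]
    exact le_top
  set t := (f p).toReal
  have hfp : f p = t := (EReal.coe_toReal htop (hbot p)).symm
  have ht : 0 < t := by rw [hfp] at hfp0; exact_mod_cast hfp0
  rw [hfp, ePlus_coe, ← ofReal_infDist hS, ofReal_le_ofReal_div_ofReal_iff hb.le ht]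
  by_contra! hlt
  obtain ⟨w, hwx, hfw0, hfwρ, hwslope⟩ := hwit p t hpx hfp ht hlt
  exact (hεslope.trans_le (iInf₂_le w ⟨hwx, hfw0, hfwρ⟩)).not_ge hwslope

end Slopes

/-- if `X`, `Y` are complete and `f₊` is lower semicontinuous on a
neighbourhood of `(x̄,ȳ)`, then `Er f(x̄,ȳ) = \overline{|∇f|}^◇(x̄,ȳ)`. -/
theorem erMod2_eq_uStrictSlope2 (f : X × Y → EReal) (x₀ : X) (y₀ : Y)
    (hbot : ∀ p, f p ≠ ⊥) (hf₀ : f (x₀, y₀) = 0)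
    (hP1 : ∀ x : X, ∀ y : Y, y ≠ y₀ → 0 < f (x, y))
    (hP2 : 0 < ⨆ (δ : ℝ) (_ : 0 < δ),
        ⨅ (p : X × Y) (_ : 0 < f p ∧ f p < (δ : EReal)),
          ePlus (f p) / ENNReal.ofReal (dist p.2 y₀))
    (hlsc : ∃ U ∈ 𝓝 (x₀, y₀), LowerSemicontinuousOn (fun p => max (f p) 0) U) :
    erMod2 f x₀ y₀ = uStrictSlope2 f x₀ :=
  le_antisymm (erMod2_le_uStrictSlope2 hf₀ hP2) (uStrictSlope2_le_erMod2 hbot hf₀ hP1 hP2 hlsc)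
end

section
/- Let X and Y be metric spaces, f : X×Y → ℝ ∪ {+∞} with f(x̄,ȳ) = 0 satisfying (P1) and (P2). Then Er f(x̄,ȳ) ≤ \overline{|∇f|}^◇_1(x̄,ȳ), where \overline{|∇f|}^◇_1(x̄,ȳ) is the uniform strict slope computed with the sum-type parametric metric d¹_ρ((x,y),(u,v)) := d(x,u) + ρ d(y,v) in place of the maximum-type metric. -/
open Filter Metric Topology ENNReal

variable {X Y : Type*} [MetricSpace X] [MetricSpace Y]

/-- The sum-type parametric metric on `X × Y`:
`d¹_ρ((x,y),(u,v)) := d(x,u) + ρ d(y,v)`. -/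
noncomputable def dRhoSum (ρ : ℝ) (p q : X × Y) : ℝ := dist p.1 q.1 + ρ * dist p.2 q.2

/-- The nonlocal ρ-slope of `f` at `(x,y)` computed with the sum-type metric:
`|∇f|^{◇,1}_ρ(x,y) := sup_{(u,v)≠(x,y)} [f(x,y) − f₊(u,v)]₊ / d¹_ρ((x,y),(u,v))`. -/
noncomputable def nlSlopeRhoSum (f : X × Y → EReal) (ρ : ℝ) (p : X × Y) : ℝ≥0∞ :=
  ⨆ (q : X × Y) (_ : q ≠ p), ePlus (f p - max (f q) 0) / ENNReal.ofReal (dRhoSum ρ p q)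

/-- The uniform strict slope of `f` at `(x̄,ȳ)` computed with the sum-type metric:
`\overline{|∇f|}^◇_1(x̄,ȳ) := lim_{ρ↓0} inf {|∇f|^{◇,1}_ρ(x,y) : d(x,x̄) < ρ, 0 < f(x,y) < ρ}`
(the limit being a supremum by monotonicity; `inf ∅ = +∞`). -/
noncomputable def uStrictSlope2Sum (f : X × Y → EReal) (x₀ : X) : ℝ≥0∞ :=
  ⨆ (ρ : ℝ) (_ : 0 < ρ),
    ⨅ (p : X × Y) (_ : dist p.1 x₀ < ρ ∧ 0 < f p ∧ f p < (ρ : EReal)), nlSlopeRhoSum f ρ p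

/-!
Fix `0 < r < r' < Er f(x̄,ȳ)`. Near `x̄`, every point `(x,y)` with `f(x,y) > 0` has some `u ∈ S(f)`
with `r' d(x,u) < f(x,y)`, and by (P2) `c d(y,ȳ) ≤ f(x,y)` once `f(x,y)` is small. Comparing
`(x,y)` with `(u,ȳ)`, where `f₊ = 0`, gives a ρ-slope at least
`f(x,y) / (d(x,u) + ρ d(y,ȳ)) ≥ r` as soon as `ρ r r' ≤ c (r' - r)`.
-/

theorem ePlus_of_ne_top {a : EReal} (h : a ≠ ⊤) : ePlus a = ENNReal.ofReal a.toReal := by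
  rw [ePlus, if_neg h]

theorem ofReal_le_nlSlopeRhoSum {f : X × Y → EReal} {ρ r : ℝ} {p q : X × Y}
    (hq : f q ≤ 0) (hp : 0 < f p) (hp_top : f p ≠ ⊤) (hr : 0 ≤ r)
    (h : r * dRhoSum ρ p q ≤ (f p).toReal) :
    ENNReal.ofReal r ≤ nlSlopeRhoSum f ρ p := by
  have hqp : q ≠ p := by
    rintro rfl
    exact hq.not_gt hp
  refine le_iSup₂_of_le q hqp ?_
  have hpos : ENNReal.ofReal (f p).toReal ≠ 0 :=
    (ENNReal.ofReal_pos.mpr (EReal.toReal_pos hp hp_top)).ne'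
  rw [max_eq_right hq, sub_zero, ePlus_of_ne_top hp_top,
    ENNReal.le_div_iff_mul_le (Or.inr hpos) (Or.inr ofReal_ne_top), ← ENNReal.ofReal_mul hr]
  exact ENNReal.ofReal_le_ofReal h

theorem exists_mul_dist_lt_of_lt_erMod2 {X Y : Type*} [MetricSpace X] {f : X × Y → EReal}
    {x₀ : X} {y₀ : Y} {r : ℝ}
    (hr : 0 < r) (hEr : ENNReal.ofReal r < erMod2 f x₀ y₀) :
    ∃ δ : ℝ, 0 < δ ∧ ∀ p : X × Y, dist p.1 x₀ < δ → 0 < f p → f p ≠ ⊤ →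
      ∃ u, f (u, y₀) ≤ 0 ∧ r * dist p.1 u < (f p).toReal := by
  obtain ⟨δ, hδEr⟩ := lt_iSup_iff.mp hEr
  obtain ⟨hδ, hδEr⟩ := lt_iSup_iff.mp hδEr
  refine ⟨δ, hδ, fun p hpx hp hp_top => ?_⟩
  have hr₀ : ENNReal.ofReal r ≠ 0 := (ENNReal.ofReal_pos.mpr hr).ne'
  have hdist : infEDist p.1 {x | f (x, y₀) ≤ 0} < ePlus (f p) / ENNReal.ofReal r := by
    rw [ENNReal.lt_div_iff_mul_lt (Or.inl hr₀) (Or.inl ofReal_ne_top), mul_comm]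
    exact ENNReal.mul_lt_of_lt_div (hδEr.trans_le (iInf₂_le p ⟨hpx, hp⟩))
  obtain ⟨u, hu, hpu⟩ := infEDist_lt_iff.mp hdist
  refine ⟨u, hu, ?_⟩
  rw [ENNReal.lt_div_iff_mul_lt (Or.inl hr₀) (Or.inl ofReal_ne_top), edist_dist,
    ePlus_of_ne_top hp_top, ← ENNReal.ofReal_mul dist_nonneg, mul_comm] at hpu
  exact (ENNReal.ofReal_lt_ofReal_iff'.mp hpu).1

theorem exists_mul_dist_snd_le {X Y : Type*} [MetricSpace Y] {f : X × Y → EReal} {y₀ : Y}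
    (hP2 : 0 < ⨆ (δ : ℝ) (_ : 0 < δ),
        ⨅ (p : X × Y) (_ : 0 < f p ∧ f p < (δ : EReal)),
          ePlus (f p) / ENNReal.ofReal (dist p.2 y₀)) :
    ∃ δ : ℝ, 0 < δ ∧ ∃ c : ℝ, 0 < c ∧ ∀ p : X × Y, 0 < f p → f p < (δ : EReal) →
      c * dist p.2 y₀ ≤ (f p).toReal := by
  obtain ⟨δ, hδP2⟩ := lt_iSup_iff.mp hP2
  obtain ⟨hδ, hδP2⟩ := lt_iSup_iff.mp hδP2
  obtain ⟨c, -, hc, hcP2⟩ := ENNReal.lt_iff_exists_real_btwn.mp hδP2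
  have hc₀ : 0 < c := ENNReal.ofReal_pos.mp hc
  refine ⟨δ, hδ, c, hc₀, fun p hp hpδ => ?_⟩
  have h := ENNReal.mul_le_of_le_div (hcP2.le.trans (iInf₂_le p ⟨hp, hpδ⟩))
  rwa [ePlus_of_ne_top (hpδ.trans (EReal.coe_lt_top δ)).ne, ← ENNReal.ofReal_mul hc₀.le,
    ENNReal.ofReal_le_ofReal_iff (EReal.toReal_nonneg hp.le)] at h

theorem ofReal_le_uStrictSlope2Sum {f : X × Y → EReal} {x₀ : X} {y₀ : Y} {r r' δ₂ c : ℝ}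
    (hr : 0 < r) (hrr' : r < r') (hEr : ENNReal.ofReal r' < erMod2 f x₀ y₀)
    (hδ₂ : 0 < δ₂) (hc : 0 < c)
    (hy : ∀ p : X × Y, 0 < f p → f p < (δ₂ : EReal) → c * dist p.2 y₀ ≤ (f p).toReal) :
    ENNReal.ofReal r ≤ uStrictSlope2Sum f x₀ := by
  have hr' : 0 < r' := hr.trans hrr'
  obtain ⟨δ, hδ, hx⟩ := exists_mul_dist_lt_of_lt_erMod2 hr' hEr
  set ρ := min δ (min δ₂ (c * (r' - r) / (r * r')))
  have hρ : 0 < ρ := lt_min hδ (lt_min hδ₂ (by have := sub_pos.2 hrr'; positivity))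
  have hρδ₂ : ρ ≤ δ₂ := (min_le_right _ _).trans (min_le_left _ _)
  have hρrr' : ρ * (r * r') ≤ c * (r' - r) :=
    (le_div_iff₀ (by positivity)).mp ((min_le_right _ _).trans (min_le_right _ _))
  refine le_iSup₂_of_le ρ hρ (le_iInf₂ fun p ⟨hpx, hp, hpρ⟩ => ?_)
  have hp_top : f p ≠ ⊤ := hpρ.ne_top
  obtain ⟨u, hu, hpu⟩ := hx p (hpx.trans_le (min_le_left _ _)) hp hp_top
  have hpy := hy p hp (hpρ.trans_le (EReal.coe_le_coe_iff.mpr hρδ₂))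
  refine ofReal_le_nlSlopeRhoSum (q := (u, y₀)) hu hp hp_top hr.le ?_
  set t := (f p).toReal
  have key : r' * (r * dRhoSum ρ p (u, y₀)) ≤ r' * t := calc
    r' * (r * dRhoSum ρ p (u, y₀))
        = r * (r' * dist p.1 u) + ρ * (r * r') * dist p.2 y₀ := by rw [dRhoSum]; ring
    _ ≤ r * t + c * (r' - r) * dist p.2 y₀ := by gcongr
    _ = r * t + (r' - r) * (c * dist p.2 y₀) := by ring
    _ ≤ r * t + (r' - r) * t := by gcongr
    _ = r' * t := by ring
  exact le_of_mul_le_mul_left key hr'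

theorem erMod2_le_uStrictSlope2Sum_general (f : X × Y → EReal) (x₀ : X) (y₀ : Y)
    (hP2 : 0 < ⨆ (δ : ℝ) (_ : 0 < δ),
        ⨅ (p : X × Y) (_ : 0 < f p ∧ f p < (δ : EReal)),
          ePlus (f p) / ENNReal.ofReal (dist p.2 y₀)) :
    erMod2 f x₀ y₀ ≤ uStrictSlope2Sum f x₀ := by
  obtain ⟨δ₂, hδ₂, c, hc, hy⟩ := exists_mul_dist_snd_le hP2
  refine le_of_forall_lt_imp_le_of_dense fun a ha => ?_
  obtain ⟨r', -, har', hr'⟩ := ENNReal.lt_iff_exists_real_btwn.mp ha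
  obtain ⟨r, -, har, hrr'⟩ := ENNReal.lt_iff_exists_real_btwn.mp har'
  have hr : 0 < r := ENNReal.ofReal_pos.mp (zero_le.trans_lt har)
  exact har.le.trans <| ofReal_le_uStrictSlope2Sum hr (ENNReal.ofReal_lt_ofReal_iff'.mp hrr').1
    hr' hδ₂ hc hy

/-- `Er f(x̄,ȳ) ≤ \overline{|∇f|}^◇_1(x̄,ȳ)` (sum-type parametric metric). -/
theorem erMod2_le_uStrictSlope2Sum (f : X × Y → EReal) (x₀ : X) (y₀ : Y)
    (hbot : ∀ p, f p ≠ ⊥) (hf₀ : f (x₀, y₀) = 0)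
    (hP1 : ∀ x : X, ∀ y : Y, y ≠ y₀ → 0 < f (x, y))
    (hP2 : 0 < ⨆ (δ : ℝ) (_ : 0 < δ),
        ⨅ (p : X × Y) (_ : 0 < f p ∧ f p < (δ : EReal)),
          ePlus (f p) / ENNReal.ofReal (dist p.2 y₀)) :
    erMod2 f x₀ y₀ ≤ uStrictSlope2Sum f x₀ :=
  erMod2_le_uStrictSlope2Sum_general f x₀ y₀ hP2
end

section
/- Let X and Y be metric spaces, F : X ⇒ Y a set-valued mapping, and (x̄,ȳ) ∈ gph F. Then sr[F](x̄,ȳ) ≤ \overline{|∇F|}^◇(x̄,ȳ), i.e. the metric subregularity modulus of F at (x̄,ȳ) is bounded above by the uniform strict slope of F at (x̄,ȳ). -/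
open Filter Metric Topology ENNReal

variable {X Y : Type*} [MetricSpace X] [MetricSpace Y]

/-- The nonlocal ρ-slope of a set-valued mapping `F` at `(x,y) ∈ gph F`:
`|∇F|^◇_ρ(x,y) := sup {[d(y,ȳ) − d(v,ȳ)]₊ / d_ρ((u,v),(x,y)) : (u,v) ∈ gph F, (u,v) ≠ (x,y)}`,
where `d_ρ((u,v),(x,y)) = max {d(u,x), ρ d(v,y)}`. -/
noncomputable def nlSlopeF (F : X → Set Y) (y₀ : Y) (ρ : ℝ) (p : X × Y) : ℝ≥0∞ :=
  ⨆ (q : X × Y) (_ : q.2 ∈ F q.1 ∧ q ≠ p),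
    ENNReal.ofReal (dist p.2 y₀ - dist q.2 y₀) /
      ENNReal.ofReal (max (dist q.1 p.1) (ρ * dist q.2 p.2))

/-- The uniform strict slope of `F` at `(x̄,ȳ)`:
`\overline{|∇F|}^◇(x̄,ȳ) := lim_{ρ↓0} inf {|∇F|^◇_ρ(x,y) : (x,y) ∈ gph F, x ∉ F⁻¹(ȳ),
d(x,x̄) < ρ, d(y,ȳ) < ρ}` (the limit being a supremum by monotonicity; `inf ∅ = +∞`). -/
noncomputable def uStrictSlopeF (F : X → Set Y) (x₀ : X) (y₀ : Y) : ℝ≥0∞ :=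
  ⨆ (ρ : ℝ) (_ : 0 < ρ),
    ⨅ (p : X × Y)
      (_ : p.2 ∈ F p.1 ∧ y₀ ∉ F p.1 ∧ dist p.1 x₀ < ρ ∧ dist p.2 y₀ < ρ),
        nlSlopeF F y₀ ρ p

/-- The metric subregularity modulus
`sr[F](x̄,ȳ) := liminf_{x→x̄, x∉F⁻¹(ȳ)} d(ȳ,F(x)) / d(x,F⁻¹(ȳ))`. -/
noncomputable def srMod (F : X → Set Y) (x₀ : X) (y₀ : Y) : ℝ≥0∞ :=
  ⨆ (δ : ℝ) (_ : 0 < δ),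
    ⨅ (x : X) (_ : dist x x₀ < δ ∧ y₀ ∉ F x),
      EMetric.infEdist y₀ (F x) / EMetric.infEdist x {x' | y₀ ∈ F x'}

/-!
If `γ < d(ȳ, F x) / d(x, F⁻¹ ȳ)` at a graph point `(x, y)` with `ȳ ∉ F x`, then, since
`d(ȳ, F x) ≤ d(y, ȳ)`, some `u ∈ F⁻¹ ȳ` satisfies `γ d(u, x) < d(y, ȳ)`. Testing the nonlocal
slope at `(x, y)` with the graph point `(u, ȳ)` gives `d(y, ȳ) / max {d(u, x), ρ d(y, ȳ)} ≥ γ`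
as soon as `γ ρ ≤ 1`, so it suffices to take `ρ` small.
-/

theorem edist_div_le_nlSlopeF {F : X → Set Y} {y₀ : Y} {ρ : ℝ} {p : X × Y} {u : X}
    (hρ : 0 ≤ ρ) (hu : y₀ ∈ F u) (hne : (u, y₀) ≠ p) :
    edist p.2 y₀ / max (edist u p.1) (ENNReal.ofReal ρ * edist y₀ p.2) ≤
      nlSlopeF F y₀ ρ p :=
  le_iSup₂_of_le (u, y₀) ⟨hu, hne⟩ <| by
    simp [edist_dist, ENNReal.ofReal_max, ENNReal.ofReal_mul hρ]

theorem exists_pos_lt_mul_ofReal_lt_one {γ : ℝ≥0∞} (hγ : γ ≠ ∞) {δ : ℝ} (hδ : 0 < δ) :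
    ∃ ρ, (0 < ρ ∧ ρ < δ) ∧ γ * ENNReal.ofReal ρ < 1 := by
  have hlim : Tendsto (fun ρ => γ * ENNReal.ofReal ρ) (𝓝[>] 0) (𝓝 0) := by
    simpa using (ENNReal.Tendsto.const_mul
      (ENNReal.tendsto_ofReal (tendsto_id (x := 𝓝 (0 : ℝ)))) (.inr hγ)).mono_left
      nhdsWithin_le_nhds
  have hsmall : ∀ᶠ ρ in 𝓝[>] (0 : ℝ), ρ ∈ Set.Ioo 0 δ := Ioo_mem_nhdsGT hδ
  exact (hsmall.and (hlim.eventually (gt_mem_nhds zero_lt_one))).exists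

theorem le_nlSlopeF_of_lt_div_infEDist {F : X → Set Y} {y₀ : Y} {ρ : ℝ} {p : X × Y}
    {γ : ℝ≥0∞} (hρ : 0 ≤ ρ) (hγρ : γ * ENNReal.ofReal ρ ≤ 1)
    (hp : p.2 ∈ F p.1) (hpy : y₀ ∉ F p.1)
    (hγ : γ < infEDist y₀ (F p.1) / infEDist p.1 {x | y₀ ∈ F x}) :
    γ ≤ nlSlopeF F y₀ ρ p := by
  rcases eq_or_ne γ 0 with rfl | hγ0
  · exact zero_le
  have hy : edist p.2 y₀ ≠ 0 := fun h => hpy (edist_eq_zero.mp h ▸ hp)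
  have hdist : infEDist y₀ (F p.1) ≤ edist p.2 y₀ := by
    rw [edist_comm]; exact infEDist_le_edist_of_mem hp
  obtain ⟨u, hu, hux⟩ : ∃ u ∈ {x | y₀ ∈ F x}, edist p.1 u < edist p.2 y₀ / γ := by
    refine infEDist_lt_iff.mp ((ENNReal.lt_div_iff_mul_lt (.inl hγ0)
      (.inl hγ.ne_top)).mpr ?_)
    exact (ENNReal.mul_lt_of_lt_div' hγ).trans_le hdist
  have hne : (u, y₀) ≠ p := by rintro rfl; exact hpy hu
  refine le_trans ?_ (edist_div_le_nlSlopeF hρ hu hne)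
  refine (ENNReal.le_div_iff_mul_le (.inr hy) (.inr (edist_ne_top _ _))).mpr ?_
  rw [mul_max_of_nonneg _ _ (zero_le : 0 ≤ γ)]
  refine max_le ?_ ?_
  · rw [edist_comm, mul_comm]; exact ENNReal.mul_le_of_le_div hux.le
  · calc γ * (ENNReal.ofReal ρ * edist y₀ p.2) ≤ 1 * edist p.2 y₀ := by
          rw [← mul_assoc, edist_comm]; gcongr
      _ = edist p.2 y₀ := one_mul _

theorem srMod_le_uStrictSlopeF_general (F : X → Set Y) (x₀ : X) (y₀ : Y) :
    srMod F x₀ y₀ ≤ uStrictSlopeF F x₀ y₀ := by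
  refine iSup₂_le fun δ hδ => le_of_forall_lt_imp_le_of_dense fun γ hγ => ?_
  obtain ⟨ρ, ⟨hρ, hρδ⟩, hγρ⟩ := exists_pos_lt_mul_ofReal_lt_one hγ.ne_top hδ
  refine le_iSup₂_of_le ρ hρ (le_iInf₂ fun p ⟨hp, hpy, hpx, _⟩ => ?_)
  exact le_nlSlopeF_of_lt_div_infEDist hρ.le hγρ.le hp hpy
    (hγ.trans_le (iInf₂_le p.1 ⟨hpx.trans hρδ, hpy⟩))

/-- `sr[F](x̄,ȳ) ≤ \overline{|∇F|}^◇(x̄,ȳ)`. -/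
theorem srMod_le_uStrictSlopeF (F : X → Set Y) (x₀ : X) (y₀ : Y)
    (hgph : y₀ ∈ F x₀) : srMod F x₀ y₀ ≤ uStrictSlopeF F x₀ y₀ :=
  srMod_le_uStrictSlopeF_general F x₀ y₀
end
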